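/- arXiv:2006.01305 — 5 statements merged into one kernel-verified Lean document; each statement's English description precedes it below -/
import Mathlib

section
/- Let k ≥ 1 be an integer and define I: (−1,1) → ℝ by I(h) = −k h^{2k−1} (1 + 2k − h^{2k}) / ((1+k)(h^{2k} − 1)³). Then I is strictly increasing on (−1,1); in particular I'(h) = −(k h^{2k−2} / ((k+1)(h^{2k} − 1)⁴)) · [(−2k − 8k² − 2) h^{2k} + (2k+1) h^{4k} + 1 − 4k²] and I'(h) > 0 for every h ∈ (−1,1) with h ≠ 0. -/
/-! `I'` factors as `-k h^(2k-2) / ((k+1) (h^(2k) - 1)^4)` times a quadratic in `x = h^(2k)`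
that is convex and negative at both ends of `[0, 1]`. So `I' > 0` on `(-1, 1)` except at
`h = 0`, and a function whose derivative is positive off a single point is strictly increasing. -/
open Set

noncomputable def periodCriterion (k : ℕ) (h : ℝ) : ℝ :=
  -(k : ℝ) * h ^ (2 * k - 1) * (1 + 2 * (k : ℝ) - h ^ (2 * k))
    / ((1 + (k : ℝ)) * (h ^ (2 * k) - 1) ^ 3)

noncomputable def periodCriterionDeriv (k : ℕ) (h : ℝ) : ℝ :=
  -((k : ℝ) * h ^ (2 * k - 2) / (((k : ℝ) + 1) * (h ^ (2 * k) - 1) ^ 4)) *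
    ((-2 * (k : ℝ) - 8 * (k : ℝ) ^ 2 - 2) * h ^ (2 * k)
      + (2 * (k : ℝ) + 1) * h ^ (4 * k) + 1 - 4 * (k : ℝ) ^ 2)

theorem strictMonoOn_Ioo_of_hasDerivAt_pos_of_ne {f f' : ℝ → ℝ} {a b c : ℝ} (hc : c ∈ Ioo a b)
    (hf : ∀ x ∈ Ioo a b, HasDerivAt f (f' x) x) (hf' : ∀ x ∈ Ioo a b, x ≠ c → 0 < f' x) :
    StrictMonoOn f (Ioo a b) := by
  have hleft : StrictMonoOn f (Ioc a c) := by
    refine strictMonoOn_of_hasDerivWithinAt_pos (f' := f') (convex_Ioc a c)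
      (fun x hx => (hf x ⟨hx.1, hx.2.trans_lt hc.2⟩).continuousAt.continuousWithinAt)
      (fun x hx => ?_) (fun x hx => ?_) <;> rw [interior_Ioc] at hx
    · exact (hf x ⟨hx.1, hx.2.trans hc.2⟩).hasDerivWithinAt
    · exact hf' x ⟨hx.1, hx.2.trans hc.2⟩ hx.2.ne
  have hright : StrictMonoOn f (Ico c b) := by
    refine strictMonoOn_of_hasDerivWithinAt_pos (f' := f') (convex_Ico c b)
      (fun x hx => (hf x ⟨hc.1.trans_le hx.1, hx.2⟩).continuousAt.continuousWithinAt)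
      (fun x hx => ?_) (fun x hx => ?_) <;> rw [interior_Ico] at hx
    · exact (hf x ⟨hc.1.trans hx.1, hx.2⟩).hasDerivWithinAt
    · exact hf' x ⟨hc.1.trans hx.1, hx.2⟩ hx.1.ne'
  rw [← Ioc_union_Ico_eq_Ioo hc.1 hc.2]
  exact hleft.union hright (isGreatest_Ioc hc.1) (isLeast_Ico hc.2)

theorem pow_two_mul_lt_one {h : ℝ} (hh : h ∈ Ioo (-1) 1) {k : ℕ} (hk : k ≠ 0) : h ^ (2 * k) < 1 :=
  (even_two_mul k).pow_abs h ▸ pow_lt_one₀ (abs_nonneg h) (abs_lt.2 hh) (by omega)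

theorem quadratic_neg_of_mem_Icc {c x : ℝ} (hc : 1 / 2 < c) (hx : x ∈ Icc (0 : ℝ) 1) :
    (-2 * c - 8 * c ^ 2 - 2) * x + (2 * c + 1) * x ^ 2 + 1 - 4 * c ^ 2 < 0 := by
  obtain ⟨hx0, hx1⟩ := hx
  -- convex in `x`, with values `1 - 4c²` at `x = 0` and `-12c²` at `x = 1`
  nlinarith [mul_nonneg hx0 (sub_nonneg.2 hx1)]

theorem hasDerivAt_periodCriterion {k : ℕ} (hk : 1 ≤ k) {h : ℝ} (hh : h ^ (2 * k) ≠ 1) :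
    HasDerivAt (periodCriterion k) (periodCriterionDeriv k h) h := by
  obtain ⟨n, rfl⟩ := Nat.exists_eq_add_of_le' hk
  have hne : h ^ (2 * n + 2) - 1 ≠ 0 := sub_ne_zero.2 hh
  have hN := ((hasDerivAt_pow (2 * n + 1) h).const_mul (-((n : ℝ) + 1))).fun_mul
    ((hasDerivAt_pow (2 * n + 2) h).const_sub (1 + 2 * ((n : ℝ) + 1)))
  have hD := (((hasDerivAt_pow (2 * n + 2) h).sub_const 1).fun_pow 3).const_mul
    (1 + ((n : ℝ) + 1))
  have hI := hN.fun_div hD (mul_ne_zero (by positivity) (pow_ne_zero _ hne))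
  unfold periodCriterion periodCriterionDeriv
  rw [show 2 * (n + 1) = 2 * n + 2 by omega, show 4 * (n + 1) = 4 * n + 4 by omega,
    show 2 * n + 2 - 1 = 2 * n + 1 by omega, show 2 * n + 2 - 2 = 2 * n by omega]
  push_cast
  refine hI.congr_deriv ?_
  push_cast
  field_simp
  ring

theorem periodCriterionDeriv_pos {k : ℕ} (hk : 1 ≤ k) {h : ℝ} (hh : h ∈ Ioo (-1) 1) (h0 : h ≠ 0) :
    0 < periodCriterionDeriv k h := by
  have hx : h ^ (2 * k) ∈ Icc (0 : ℝ) 1 :=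
    ⟨(even_two_mul k).pow_nonneg h, (pow_two_mul_lt_one hh (by omega)).le⟩
  have hQ := quadratic_neg_of_mem_Icc (c := k) (by linarith [(Nat.one_le_cast (α := ℝ)).2 hk]) hx
  have hprefactor : 0 < (k : ℝ) * h ^ (2 * k - 2) / (((k : ℝ) + 1) * (h ^ (2 * k) - 1) ^ 4) := by
    have hpow : 0 < h ^ (2 * k - 2) := (show Even (2 * k - 2) from ⟨k - 1, by omega⟩).pow_pos h0
    have hden : 0 < (h ^ (2 * k) - 1) ^ 4 :=
      (even_two_mul 2).pow_pos (sub_ne_zero.2 (pow_two_mul_lt_one hh (by omega)).ne)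
    have : (0 : ℝ) < k := by exact_mod_cast hk
    positivity
  rw [periodCriterionDeriv, show 4 * k = 2 * k * 2 by ring, pow_mul h (2 * k) 2]
  exact mul_pos_of_neg_of_neg (neg_neg_of_pos hprefactor) hQ

/-- For `k ≥ 1`, the function
`I h = −k h^(2k−1)(1 + 2k − h^(2k)) / ((1+k)(h^(2k) − 1)³)` is strictly increasing on
`(−1,1)`; in particular its derivative is given by the displayed formula and is positive
at every `h ∈ (−1,1)` with `h ≠ 0`. -/
theorem stmt_1 (k : ℕ) (hk : 1 ≤ k)
    (I : ℝ → ℝ)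
    (hI : I = fun h : ℝ =>
      -(k : ℝ) * h ^ (2 * k - 1) * (1 + 2 * (k : ℝ) - h ^ (2 * k))
        / ((1 + (k : ℝ)) * (h ^ (2 * k) - 1) ^ 3)) :
    StrictMonoOn I (Set.Ioo (-1 : ℝ) 1) ∧
    ∀ h ∈ Set.Ioo (-1 : ℝ) 1,
      deriv I h =
        -((k : ℝ) * h ^ (2 * k - 2) / (((k : ℝ) + 1) * (h ^ (2 * k) - 1) ^ 4)) *
          ((-2 * (k : ℝ) - 8 * (k : ℝ) ^ 2 - 2) * h ^ (2 * k)
            + (2 * (k : ℝ) + 1) * h ^ (4 * k) + 1 - 4 * (k : ℝ) ^ 2) ∧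
      (h ≠ 0 → 0 < deriv I h) := by
  obtain rfl : I = periodCriterion k := hI
  have hderiv : ∀ h ∈ Ioo (-1 : ℝ) 1,
      HasDerivAt (periodCriterion k) (periodCriterionDeriv k h) h := fun h hh =>
    hasDerivAt_periodCriterion hk (pow_two_mul_lt_one hh (by omega)).ne
  refine ⟨strictMonoOn_Ioo_of_hasDerivAt_pos_of_ne (c := 0) (by norm_num) hderiv
      fun h hh h0 => periodCriterionDeriv_pos hk hh h0, fun h hh => ⟨(hderiv h hh).deriv, ?_⟩⟩
  rw [(hderiv h hh).deriv]
  exact periodCriterionDeriv_pos hk hh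
end

section
/- Fix an integer k ≥ 1 and ω > 0, set B_ω = k/(2ω(k+1)), and for B ∈ (0, B_ω) let b(B) ∈ (0,1) be the unique root in (0,1) of x²/(2ω) − x^{2k+2}/((2k+2)ω) = B. Define the period map L: (0, B_ω) → ℝ by L(B) = 2 ∫_{−b(B)}^{b(B)} (2B − h²/ω + h^{2k+2}/((k+1)ω))^{−1/2} dh. Then L is differentiable and L'(B) > 0 for every B ∈ (0, B_ω); in particular L is strictly increasing. -/
open MeasureTheory Set Filter Topology Real
open scoped Interval

/-!
Substituting `h = b(B) s` turns the period into `L(B) = 2 √ω G(b(B)^(2k))`, where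
`G(t) = ∫_{-1}^{1} r(t,s)^(-1/2) ds`, `r(t,s) = (1 - s²) - t c(s)` and
`c(s) = (1 - s^(2k+2))/(k+1)`. Since `0 ≤ c(s) ≤ 1 - s²`, for `t` in a compact subset of `(0,1)`
the radicand `r` is at least a fixed multiple of `1 - s²`, so differentiation under the integral
sign (with the integrable majorant `(1 - s²)^(-1/2)`) gives `G'(t) = ∫ c / (2 r^(3/2)) > 0`.
The amplitude `b` inverts the potential, which is strictly increasing on `(0,1)` with
nonvanishing derivative when `k ≥ 1`, so `b` is differentiable with `b' > 0`, and the chain rule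
gives `L' > 0`.
-/

noncomputable def potential (k : ℕ) (ω x : ℝ) : ℝ :=
  x ^ 2 / (2 * ω) - x ^ (2 * k + 2) / ((2 * (k : ℝ) + 2) * ω)

noncomputable def periodCorrection (k : ℕ) (s : ℝ) : ℝ :=
  (1 - s ^ (2 * k + 2)) / ((k : ℝ) + 1)

noncomputable def periodRadicand (k : ℕ) (t s : ℝ) : ℝ :=
  (1 - s ^ 2) - t * periodCorrection k s

noncomputable def normalizedPeriod (k : ℕ) (t : ℝ) : ℝ :=
  ∫ s in (-1 : ℝ)..1, (√(periodRadicand k t s))⁻¹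

section Correction

variable {k : ℕ} {s t T : ℝ}

lemma periodCorrection_nonneg (hs : s ∈ Icc (-1 : ℝ) 1) : 0 ≤ periodCorrection k s := by
  have hs2 : s ^ 2 ≤ 1 := by nlinarith [hs.1, hs.2]
  have : s ^ (2 * k + 2) ≤ 1 := by
    rw [show s ^ (2 * k + 2) = (s ^ 2) ^ (k + 1) by ring]
    exact pow_le_one₀ (sq_nonneg s) hs2
  exact div_nonneg (by linarith) (by positivity)

lemma periodCorrection_pos (hs : s ∈ Ioo (-1 : ℝ) 1) : 0 < periodCorrection k s := by
  have hs2 : s ^ 2 < 1 := by nlinarith [hs.1, hs.2]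
  have : s ^ (2 * k + 2) < 1 := by
    rw [show s ^ (2 * k + 2) = (s ^ 2) ^ (k + 1) by ring]
    exact pow_lt_one₀ (sq_nonneg s) hs2 k.succ_ne_zero
  exact div_pos (by linarith) (by positivity)

lemma periodCorrection_le (k : ℕ) (s : ℝ) : periodCorrection k s ≤ 1 - s ^ 2 := by
  rw [periodCorrection, div_le_iff₀ (by positivity)]
  have h := one_add_mul_le_pow (a := s ^ 2 - 1) (by nlinarith [sq_nonneg s]) (k + 1)
  rw [add_sub_cancel, ← pow_mul] at h
  rw [show 2 * k + 2 = 2 * (k + 1) by ring]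
  push_cast at h
  nlinarith

lemma continuous_periodCorrection (k : ℕ) : Continuous (periodCorrection k) := by
  unfold periodCorrection
  fun_prop

lemma continuous_periodRadicand (k : ℕ) (t : ℝ) : Continuous (periodRadicand k t) := by
  unfold periodRadicand
  exact (continuous_const.sub (continuous_pow 2)).sub
    (continuous_const.mul (continuous_periodCorrection k))

lemma one_sub_mul_le_periodRadicand (hs : s ∈ Icc (-1 : ℝ) 1) (hT : 0 ≤ T) (ht : t ≤ T) :
    (1 - T) * (1 - s ^ 2) ≤ periodRadicand k t s := by
  have hc0 := periodCorrection_nonneg (k := k) hs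
  have hc1 := periodCorrection_le k s
  unfold periodRadicand
  nlinarith [mul_le_mul_of_nonneg_right ht hc0, mul_le_mul_of_nonneg_left hc1 hT]

lemma mul_one_sub_sq_pos (hs : s ∈ Ioo (-1 : ℝ) 1) (hT : T < 1) : 0 < (1 - T) * (1 - s ^ 2) :=
  mul_pos (by linarith) (by nlinarith [hs.1, hs.2])

lemma periodRadicand_pos (hs : s ∈ Ioo (-1 : ℝ) 1) (hT₀ : 0 ≤ T) (hT₁ : T < 1) (ht : t ≤ T) :
    0 < periodRadicand k t s :=
  (mul_one_sub_sq_pos hs hT₁).trans_le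
    (one_sub_mul_le_periodRadicand (Ioo_subset_Icc_self hs) hT₀ ht)

lemma inv_sqrt_periodRadicand_le (hs : s ∈ Ioo (-1 : ℝ) 1) (hT₀ : 0 ≤ T) (hT₁ : T < 1)
    (ht : t ≤ T) : (√(periodRadicand k t s))⁻¹ ≤ (√(1 - T))⁻¹ * (√(1 - s ^ 2))⁻¹ := by
  rw [← mul_inv, ← sqrt_mul (by linarith)]
  exact inv_anti₀ (sqrt_pos.2 (mul_one_sub_sq_pos hs hT₁))
    (sqrt_le_sqrt (one_sub_mul_le_periodRadicand (Ioo_subset_Icc_self hs) hT₀ ht))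

lemma periodCorrection_div_le (hs : s ∈ Ioo (-1 : ℝ) 1) (hT₀ : 0 ≤ T) (hT₁ : T < 1)
    (ht : t ≤ T) :
    periodCorrection k s / (2 * √(periodRadicand k t s) * periodRadicand k t s)
      ≤ (2 * (1 - T) * √(1 - T))⁻¹ * (√(1 - s ^ 2))⁻¹ := by
  have hs' := Ioo_subset_Icc_self hs
  have hm := mul_one_sub_sq_pos hs hT₁
  have hmr := one_sub_mul_le_periodRadicand (k := k) hs' hT₀ ht
  have hs2 : 0 < 1 - s ^ 2 := by nlinarith [hs.1, hs.2]
  calc periodCorrection k s / (2 * √(periodRadicand k t s) * periodRadicand k t s)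
      ≤ (1 - s ^ 2) / (2 * √((1 - T) * (1 - s ^ 2)) * ((1 - T) * (1 - s ^ 2))) := by
        have := sqrt_pos.2 hm
        gcongr
        exact periodCorrection_le k s
    _ = (2 * (1 - T) * √(1 - T))⁻¹ * (√(1 - s ^ 2))⁻¹ := by
        have h1 : 0 < √(1 - T) := sqrt_pos.2 (by linarith)
        have h2 : 0 < √(1 - s ^ 2) := sqrt_pos.2 hs2
        rw [sqrt_mul (by linarith)]
        field_simp

end Correction

lemma hasDerivAt_inv_sqrt_sub_mul {a c t : ℝ} (h : 0 < a - t * c) :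
    HasDerivAt (fun t => (√(a - t * c))⁻¹) (c / (2 * √(a - t * c) * (a - t * c))) t := by
  have hlin : HasDerivAt (fun t => a - t * c) (0 - 1 * c) t :=
    (hasDerivAt_const t a).sub ((hasDerivAt_id t).mul_const c)
  refine ((hlin.sqrt h.ne').inv (sqrt_pos.2 h).ne').congr_deriv ?_
  rw [sq_sqrt h.le]
  field_simp
  ring

lemma intervalIntegrable_inv_sqrt_one_sub_sq :
    IntervalIntegrable (fun s : ℝ => (√(1 - s ^ 2))⁻¹) volume (-1) 1 :=
  intervalIntegral.intervalIntegrable_deriv_of_nonneg continuous_arcsin.continuousOn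
    (fun x hx => by
      rw [min_eq_left (by norm_num), max_eq_right (by norm_num)] at hx
      simpa [one_div] using hasDerivAt_arcsin hx.1.ne' hx.2.ne)
    (fun _ _ => by positivity)

lemma ae_mem_Ioo_of_mem_uIoc {a b : ℝ} (hab : a ≤ b) : ∀ᵐ s, s ∈ Ι a b → s ∈ Ioo a b := by
  filter_upwards [(Ioo_ae_eq_Ioc (μ := volume) (a := a) (b := b)).mem_iff] with s hs
  rw [uIoc_of_le hab, ← hs]
  exact id

lemma aestronglyMeasurable_inv_sqrt_periodRadicand (k : ℕ) (t : ℝ) (μ : Measure ℝ) :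
    AEStronglyMeasurable (fun s => (√(periodRadicand k t s))⁻¹) μ :=
  (continuous_periodRadicand k t).sqrt.measurable.inv.aestronglyMeasurable

lemma intervalIntegrable_inv_sqrt_periodRadicand (k : ℕ) {t : ℝ} (h₀ : 0 ≤ t) (h₁ : t < 1) :
    IntervalIntegrable (fun s => (√(periodRadicand k t s))⁻¹) volume (-1) 1 := by
  refine (intervalIntegrable_inv_sqrt_one_sub_sq.const_mul (√(1 - t))⁻¹).mono_fun'
    (aestronglyMeasurable_inv_sqrt_periodRadicand k t _) ?_
  filter_upwards [ae_restrict_of_ae (ae_mem_Ioo_of_mem_uIoc (show (-1 : ℝ) ≤ 1 by norm_num)),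
    ae_restrict_mem measurableSet_uIoc] with s hs hsI
  rw [norm_of_nonneg (by positivity)]
  exact inv_sqrt_periodRadicand_le (hs hsI) h₀ h₁ le_rfl

lemma exists_hasDerivAt_normalizedPeriod_pos (k : ℕ) {t₀ : ℝ} (ht₀ : t₀ ∈ Ioo (0 : ℝ) 1) :
    ∃ d, 0 < d ∧ HasDerivAt (normalizedPeriod k) d t₀ := by
  obtain ⟨h₀, h₁⟩ := ht₀
  set T := (1 + t₀) / 2 with hT
  have hT₀ : 0 ≤ T := by positivity
  have hT₁ : T < 1 := by linarith [hT]
  have hball : ∀ t ∈ Metric.ball t₀ ((1 - t₀) / 2), t ≤ T := fun t ht => by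
    rw [Metric.mem_ball, dist_eq, abs_lt] at ht
    linarith [hT]
  have hae := ae_mem_Ioo_of_mem_uIoc (show (-1 : ℝ) ≤ 1 by norm_num)
  have hcont := continuous_periodRadicand k t₀
  obtain ⟨hint, hderiv⟩ := intervalIntegral.hasDerivAt_integral_of_dominated_loc_of_deriv_le
    (F := fun t s => (√(periodRadicand k t s))⁻¹)
    (F' := fun t s => periodCorrection k s / (2 * √(periodRadicand k t s) * periodRadicand k t s))
    (bound := fun s => (2 * (1 - T) * √(1 - T))⁻¹ * (√(1 - s ^ 2))⁻¹)
    (Metric.ball_mem_nhds t₀ (ε := (1 - t₀) / 2) (by linarith))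
    (.of_forall fun t => aestronglyMeasurable_inv_sqrt_periodRadicand k t _)
    (intervalIntegrable_inv_sqrt_periodRadicand k h₀.le h₁)
    ((continuous_periodCorrection k).measurable.div
      ((continuous_const.mul hcont.sqrt).mul hcont).measurable).aestronglyMeasurable
    (by
      filter_upwards [hae] with s hs hsI t ht
      have hs := hs hsI
      have := periodRadicand_pos (k := k) hs hT₀ hT₁ (hball t ht)
      have := periodCorrection_pos (k := k) hs
      rw [norm_of_nonneg (by positivity)]
      exact periodCorrection_div_le hs hT₀ hT₁ (hball t ht))
    (intervalIntegrable_inv_sqrt_one_sub_sq.const_mul _)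
    (by
      filter_upwards [hae] with s hs hsI t ht
      exact hasDerivAt_inv_sqrt_sub_mul (periodRadicand_pos (hs hsI) hT₀ hT₁ (hball t ht)))
  refine ⟨_, intervalIntegral.intervalIntegral_pos_of_pos_on hint (fun s hs => ?_) (by norm_num),
    hderiv⟩
  have hr := periodRadicand_pos (k := k) hs h₀.le h₁ le_rfl
  have := sqrt_pos.2 hr
  have := periodCorrection_pos (k := k) hs
  show 0 < periodCorrection k s / _
  positivity

lemma integral_inv_sqrt_energy_eq (k : ℕ) {ω β B : ℝ} (hω : 0 < ω) (hβ : 0 < β)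
    (hB : potential k ω β = B) :
    ∫ h in (-β)..β, (√(2 * B - h ^ 2 / ω + h ^ (2 * k + 2) / (((k : ℝ) + 1) * ω)))⁻¹
      = √ω * normalizedPeriod k (β ^ (2 * k)) := by
  have hscale : ∀ s : ℝ,
      (√(2 * B - (β * s) ^ 2 / ω + (β * s) ^ (2 * k + 2) / (((k : ℝ) + 1) * ω)))⁻¹
        = (√ω / β) * (√(periodRadicand k (β ^ (2 * k)) s))⁻¹ := by
    intro s
    have hrad : 2 * B - (β * s) ^ 2 / ω + (β * s) ^ (2 * k + 2) / (((k : ℝ) + 1) * ω)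
        = (β ^ 2 / ω) * periodRadicand k (β ^ (2 * k)) s := by
      rw [← hB, potential, periodRadicand, periodCorrection, mul_pow β s (2 * k + 2)]
      field_simp
      ring
    rw [hrad, sqrt_mul (by positivity), mul_inv, sqrt_div (sq_nonneg β), sqrt_sq hβ.le, inv_div]
  have hsub := intervalIntegral.integral_comp_mul_left
    (fun h => (√(2 * B - h ^ 2 / ω + h ^ (2 * k + 2) / (((k : ℝ) + 1) * ω)))⁻¹)
    (a := -1) (b := 1) hβ.ne'
  simp only [hscale, intervalIntegral.integral_const_mul, mul_neg, mul_one, smul_eq_mul] at hsub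
  rw [eq_inv_mul_iff_mul_eq₀ hβ.ne', ← mul_assoc, mul_div_cancel₀ _ hβ.ne'] at hsub
  rw [normalizedPeriod, hsub]

lemma hasDerivAt_potential (k : ℕ) (ω x : ℝ) :
    HasDerivAt (potential k ω) ((x - x ^ (2 * k + 1)) / ω) x := by
  refine (((hasDerivAt_pow 2 x).div_const (2 * ω)).sub
    ((hasDerivAt_pow (2 * k + 2) x).div_const ((2 * (k : ℝ) + 2) * ω))).congr_deriv ?_
  rw [show 2 * k + 2 - 1 = 2 * k + 1 by omega]
  push_cast
  field_simp

lemma potential_deriv_pos {k : ℕ} (hk : 1 ≤ k) {ω x : ℝ} (hω : 0 < ω) (hx : x ∈ Ioo (0 : ℝ) 1) :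
    0 < (x - x ^ (2 * k + 1)) / ω := by
  have : x ^ (2 * k) < 1 := pow_lt_one₀ hx.1.le hx.2 (by omega)
  rw [pow_succ']
  exact div_pos (by nlinarith [hx.1]) hω

lemma continuous_potential (k : ℕ) (ω : ℝ) : Continuous (potential k ω) := by
  unfold potential
  fun_prop

lemma strictMonoOn_potential {k : ℕ} (hk : 1 ≤ k) {ω : ℝ} (hω : 0 < ω) :
    StrictMonoOn (potential k ω) (Ioo 0 1) := by
  refine strictMonoOn_of_deriv_pos (convex_Ioo 0 1)
    (continuous_potential k ω).continuousOn fun x hx => ?_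
  rw [interior_Ioo] at hx
  rw [(hasDerivAt_potential k ω x).deriv]
  exact potential_deriv_pos hk hω hx

lemma continuousAt_of_rightInvOn {f g : ℝ → ℝ} {s t : Set ℝ} (hs : IsOpen s) (ht : IsOpen t)
    (hf : ContinuousOn f t) (hf_mono : StrictMonoOn f t) (hg : MapsTo g s t)
    (hfg : RightInvOn g f s) {x : ℝ} (hx : x ∈ s) : ContinuousAt g x := by
  have hg_mono : MonotoneOn g s := fun a ha b hb hab =>
    le_of_not_gt fun h => by
      have := hf_mono (hg hb) (hg ha) h
      rw [hfg ha, hfg hb] at this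
      linarith
  -- every `y ∈ t` with `f y ∈ s` is `g (f y)`, by injectivity of `f` on `t`
  have himage : t ∩ f ⁻¹' s ⊆ g '' s := fun y ⟨hyt, hys⟩ =>
    ⟨f y, hys, hf_mono.injOn (hg hys) hyt (hfg hys)⟩
  refine continuousAt_of_monotoneOn_of_image_mem_nhds hg_mono (hs.mem_nhds hx)
    (mem_of_superset ((hf.isOpen_inter_preimage ht hs).mem_nhds ⟨hg hx, ?_⟩) himage)
  rw [mem_preimage, hfg hx]
  exact hx

lemma hasDerivAt_of_rightInvOn {f g : ℝ → ℝ} {s t : Set ℝ} (hs : IsOpen s) (ht : IsOpen t)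
    (hf : ContinuousOn f t) (hf_mono : StrictMonoOn f t) (hg : MapsTo g s t)
    (hfg : RightInvOn g f s) {x f' : ℝ} (hx : x ∈ s) (hf' : HasDerivAt f f' (g x))
    (hf'₀ : f' ≠ 0) : HasDerivAt g f'⁻¹ x :=
  hf'.of_local_left_inverse (continuousAt_of_rightInvOn hs ht hf hf_mono hg hfg hx) hf'₀
    (eventually_of_mem (hs.mem_nhds hx) fun _ hy => hfg hy)

lemma exists_hasDerivAt_period_pos {k : ℕ} (hk : 1 ≤ k) {ω : ℝ} (hω : 0 < ω) {S : Set ℝ}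
    (hS : IsOpen S) {b : ℝ → ℝ} (hbS : MapsTo b S (Ioo 0 1))
    (hb : RightInvOn b (potential k ω) S) {B : ℝ} (hB : B ∈ S) :
    ∃ d, 0 < d ∧ HasDerivAt (fun B => 2 * ∫ h in (-(b B))..(b B),
      (√(2 * B - h ^ 2 / ω + h ^ (2 * k + 2) / (((k : ℝ) + 1) * ω)))⁻¹) d B := by
  have hbB := hbS hB
  have hV' := potential_deriv_pos hk hω hbB
  have hb' := hasDerivAt_of_rightInvOn hS isOpen_Ioo (continuous_potential k ω).continuousOn
    (strictMonoOn_potential hk hω) hbS hb hB (hasDerivAt_potential k ω (b B)) hV'.ne'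
  obtain ⟨d, hd, hG⟩ := exists_hasDerivAt_normalizedPeriod_pos k
    ⟨pow_pos hbB.1 (2 * k), pow_lt_one₀ hbB.1.le hbB.2 (by omega)⟩
  have hF := ((hG.comp B (hb'.fun_pow (2 * k))).const_mul √ω).const_mul 2
  refine ⟨_, ?_, hF.congr_of_eventuallyEq <| eventually_of_mem (hS.mem_nhds hB) fun B hB => ?_⟩
  · have h2k : (0 : ℝ) < ((2 * k : ℕ) : ℝ) := by exact_mod_cast (by omega : 0 < 2 * k)
    have := sqrt_pos.2 hω
    have := pow_pos hbB.1 (2 * k - 1)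
    have := inv_pos.2 hV'
    positivity
  · simp only [integral_inv_sqrt_energy_eq k hω (hbS hB).1 (hb hB), Function.comp_apply]

theorem stmt_3_general (k : ℕ) (hk : 1 ≤ k) (ω : ℝ) (hω : 0 < ω)
    (Bω : ℝ)
    (b : ℝ → ℝ)
    (hb : ∀ B ∈ Set.Ioo (0 : ℝ) Bω, b B ∈ Set.Ioo (0 : ℝ) 1 ∧
      (b B) ^ 2 / (2 * ω) - (b B) ^ (2 * k + 2) / ((2 * (k : ℝ) + 2) * ω) = B)
    (L : ℝ → ℝ)
    (hL : L = fun B : ℝ => 2 * ∫ h in (-(b B))..(b B),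
      (Real.sqrt (2 * B - h ^ 2 / ω + h ^ (2 * k + 2) / (((k : ℝ) + 1) * ω)))⁻¹) :
    (∀ B ∈ Set.Ioo (0 : ℝ) Bω, DifferentiableAt ℝ L B ∧ 0 < deriv L B) ∧
    StrictMonoOn L (Set.Ioo (0 : ℝ) Bω) := by
  have hderiv : ∀ B ∈ Ioo 0 Bω, DifferentiableAt ℝ L B ∧ 0 < deriv L B := fun B hB => by
    obtain ⟨d, hd, hLd⟩ := hL ▸ exists_hasDerivAt_period_pos hk hω isOpen_Ioo
      (fun B hB => (hb B hB).1) (fun B hB => (hb B hB).2) hB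
    exact ⟨hLd.differentiableAt, hLd.deriv ▸ hd⟩
  refine ⟨hderiv, strictMonoOn_of_deriv_pos (convex_Ioo 0 Bω)
    (fun B hB => (hderiv B hB).1.continuousAt.continuousWithinAt) fun B hB => ?_⟩
  rw [interior_Ioo] at hB
  exact (hderiv B hB).2

/-- For `k ≥ 1`, `ω > 0`, `B_ω = k/(2ω(k+1))`, letting `b(B) ∈ (0,1)` be the
unique root of `x²/(2ω) − x^(2k+2)/((2k+2)ω) = B`, the period map
`L(B) = 2 ∫_{−b(B)}^{b(B)} (2B − h²/ω + h^(2k+2)/((k+1)ω))^{−1/2} dh`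
is differentiable with `L'(B) > 0` on `(0, B_ω)`; in particular `L` is strictly increasing. -/
theorem stmt_3 (k : ℕ) (hk : 1 ≤ k) (ω : ℝ) (hω : 0 < ω)
    (Bω : ℝ) (hBω : Bω = (k : ℝ) / (2 * ω * ((k : ℝ) + 1)))
    (b : ℝ → ℝ)
    (hb : ∀ B ∈ Set.Ioo (0 : ℝ) Bω, b B ∈ Set.Ioo (0 : ℝ) 1 ∧
      (b B) ^ 2 / (2 * ω) - (b B) ^ (2 * k + 2) / ((2 * (k : ℝ) + 2) * ω) = B)
    (L : ℝ → ℝ)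
    (hL : L = fun B : ℝ => 2 * ∫ h in (-(b B))..(b B),
      (Real.sqrt (2 * B - h ^ 2 / ω + h ^ (2 * k + 2) / (((k : ℝ) + 1) * ω)))⁻¹) :
    (∀ B ∈ Set.Ioo (0 : ℝ) Bω, DifferentiableAt ℝ L B ∧ 0 < deriv L B) ∧
    StrictMonoOn L (Set.Ioo (0 : ℝ) Bω) :=
  stmt_3_general k hk ω hω Bω b hb L hL
end

section
/- Let ω > 0 and define h: ℝ → ℝ by h(x) = √(2/3) · tanh(x/√ω) / √(1 − (1/3) tanh²(x/√ω)). Then h satisfies −ω h''(x) − h(x) + h(x)⁵ = 0 for all x ∈ ℝ, and h(x) → ±1 as x → ±∞. -/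
/-!
Write `h x = A (tanh (x / √ω))` with `A t = √(2/3) t / √(1 - t²/3)`. Since `tanh' = 1 - tanh²`,
the chain rule turns `-ω h'' - h + h⁵ = 0` into an algebraic identity in `t = tanh (x / √ω)`
and `r = √(1 - t²/3)`; after clearing denominators it reads `((1 - t²) - r²)² = (2t²/3)²`.
The limits follow from `tanh → ±1` and `A (±1) = ±1`.
-/

open Real Filter Topology

theorem deriv_deriv_comp_of_hasDerivAt {𝕜 : Type*} [NontriviallyNormedField 𝕜]
    {A A' A'' τ τ' τ'' : 𝕜 → 𝕜} {S : Set 𝕜} (hτS : ∀ x, τ x ∈ S)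
    (hA : ∀ t ∈ S, HasDerivAt A (A' t) t) (hA' : ∀ t ∈ S, HasDerivAt A' (A'' t) t)
    (hτ : ∀ x, HasDerivAt τ (τ' x) x) (hτ' : ∀ x, HasDerivAt τ' (τ'' x) x) (x : 𝕜) :
    deriv (deriv fun x => A (τ x)) x = A'' (τ x) * τ' x ^ 2 + A' (τ x) * τ'' x := by
  have hderiv : deriv (fun x => A (τ x)) = fun x => A' (τ x) * τ' x :=
    funext fun x => ((hA _ (hτS x)).comp x (hτ x)).deriv
  have hderiv' : HasDerivAt (fun x => A' (τ x) * τ' x)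
      (A'' (τ x) * τ' x * τ' x + A' (τ x) * τ'' x) x :=
    ((hA' _ (hτS x)).comp x (hτ x)).mul (hτ' x)
  rw [hderiv, hderiv'.deriv]
  ring

namespace Real

theorem hasDerivAt_tanh (x : ℝ) : HasDerivAt tanh (1 - tanh x ^ 2) x := by
  have hcosh := (cosh_pos x).ne'
  have hquot := (hasDerivAt_sinh x).fun_div (hasDerivAt_cosh x) hcosh
  rw [show tanh = fun y => sinh y / cosh y from funext tanh_eq_sinh_div_cosh]
  refine hquot.congr_deriv ?_
  field_simp

theorem tanh_eq_one_sub_exp_div_one_add_exp (x : ℝ) :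
    tanh x = (1 - exp (-(2 * x))) / (1 + exp (-(2 * x))) := by
  rw [tanh_eq, show -(2 * x) = -x + -x by ring, exp_add]
  have h1 : exp x * exp (-x) = 1 := by rw [← exp_add]; simp
  field_simp
  linear_combination 2 * exp (-x) * h1

theorem tendsto_tanh_atTop : Tendsto tanh atTop (𝓝 1) := by
  have hexp : Tendsto (fun x : ℝ => exp (-(2 * x))) atTop (𝓝 0) :=
    tendsto_exp_neg_atTop_nhds_zero.comp (tendsto_id.const_mul_atTop two_pos)
  have := (hexp.const_sub 1).div (hexp.const_add 1) (by norm_num)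
  rw [funext tanh_eq_one_sub_exp_div_one_add_exp]
  simpa [Pi.div_def] using this

theorem tendsto_tanh_atBot : Tendsto tanh atBot (𝓝 (-1)) := by
  have := (tendsto_tanh_atTop.comp tendsto_neg_atBot_atTop).neg
  simpa [Function.comp_def, tanh_neg] using this

end Real

theorem hasDerivAt_tanh_div (s x : ℝ) :
    HasDerivAt (fun x => tanh (x / s)) ((1 - tanh (x / s) ^ 2) / s) x := by
  refine ((hasDerivAt_tanh (x / s)).comp x ((hasDerivAt_id' x).div_const s)).congr_deriv ?_
  ring

theorem hasDerivAt_one_sub_tanh_div_sq_div (s x : ℝ) :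
    HasDerivAt (fun x => (1 - tanh (x / s) ^ 2) / s)
      (-(2 * tanh (x / s) * (1 - tanh (x / s) ^ 2)) / s ^ 2) x := by
  refine ((((hasDerivAt_tanh_div s x).fun_pow 2).const_sub 1).div_const s).congr_deriv ?_
  ring

noncomputable def kinkProfile (t : ℝ) : ℝ := √(2 / 3) * t / √(1 - 1 / 3 * t ^ 2)

noncomputable def kinkProfile' (t : ℝ) : ℝ := √(2 / 3) / √(1 - 1 / 3 * t ^ 2) ^ 3

noncomputable def kinkProfile'' (t : ℝ) : ℝ := √(2 / 3) * t / √(1 - 1 / 3 * t ^ 2) ^ 5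

section kinkProfile

variable {t : ℝ}

theorem hasDerivAt_sqrt_one_sub_third_sq (ht : t ^ 2 < 3) :
    HasDerivAt (fun t => √(1 - 1 / 3 * t ^ 2)) (-(t / 3) / √(1 - 1 / 3 * t ^ 2)) t := by
  have hq : 0 < 1 - 1 / 3 * t ^ 2 := by linarith
  have hin := ((hasDerivAt_pow 2 t).const_mul (1 / 3)).const_sub 1
  refine ((hasDerivAt_sqrt hq.ne').comp t hin).congr_deriv ?_
  field_simp
  ring

theorem hasDerivAt_kinkProfile (ht : t ^ 2 < 3) :
    HasDerivAt kinkProfile (kinkProfile' t) t := by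
  unfold kinkProfile kinkProfile'
  have hq : 0 < 1 - 1 / 3 * t ^ 2 := by linarith
  have hr := sqrt_pos.mpr hq
  have hr2 := sq_sqrt hq.le
  refine (((hasDerivAt_id' t).const_mul √(2 / 3)).fun_div
    (hasDerivAt_sqrt_one_sub_third_sq ht) hr.ne').congr_deriv ?_
  set r := √(1 - 1 / 3 * t ^ 2)
  field_simp
  linear_combination 3 * hr2

theorem hasDerivAt_kinkProfile' (ht : t ^ 2 < 3) :
    HasDerivAt kinkProfile' (kinkProfile'' t) t := by
  unfold kinkProfile' kinkProfile''
  have hr := sqrt_pos.mpr (show 0 < 1 - 1 / 3 * t ^ 2 by linarith)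
  refine ((hasDerivAt_const t √(2 / 3)).fun_div
    ((hasDerivAt_sqrt_one_sub_third_sq ht).fun_pow 3) (by positivity)).congr_deriv ?_
  set r := √(1 - 1 / 3 * t ^ 2)
  field_simp
  ring

/-- The kink equation in the variable `t = tanh (x / √ω)`, where `d/dx = (1 - t²) / √ω · d/dt`. -/
theorem kinkProfile_ode (ht : t ^ 2 < 3) :
    kinkProfile'' t * (1 - t ^ 2) ^ 2 - 2 * t * (1 - t ^ 2) * kinkProfile' t
      + kinkProfile t - kinkProfile t ^ 5 = 0 := by
  have hq : 0 < 1 - 1 / 3 * t ^ 2 := by linarith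
  have hr := sqrt_pos.mpr hq
  have hr2 := sq_sqrt hq.le
  have ha2 : √(2 / 3) ^ 2 = 2 / 3 := sq_sqrt (by norm_num)
  unfold kinkProfile kinkProfile' kinkProfile''
  set r := √(1 - 1 / 3 * t ^ 2)
  set a := √(2 / 3)
  field_simp
  linear_combination a * t * (r ^ 2 + (1 - 1 / 3 * t ^ 2) - 2 + 2 * t ^ 2) * hr2
    - a * t ^ 5 * (a ^ 2 + 2 / 3) * ha2

theorem tendsto_kinkProfile {α : Type*} {l : Filter α} {τ : α → ℝ} {c : ℝ}
    (hτ : Tendsto τ l (𝓝 c)) (hc : c ^ 2 < 3) :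
    Tendsto (fun x => kinkProfile (τ x)) l (𝓝 (kinkProfile c)) := by
  have hq : 0 < 1 - 1 / 3 * c ^ 2 := by linarith
  have hcont : ContinuousAt kinkProfile c := by
    unfold kinkProfile
    exact ContinuousAt.div (by fun_prop) (by fun_prop) (sqrt_pos.mpr hq).ne'
  exact hcont.tendsto.comp hτ

theorem kinkProfile_one : kinkProfile 1 = 1 := by
  norm_num [kinkProfile]

theorem kinkProfile_neg_one : kinkProfile (-1) = -1 := by
  norm_num [kinkProfile]

end kinkProfile

/-- For `ω > 0`, `h(x) = √(2/3)·tanh(x/√ω)/√(1 − (1/3)tanh²(x/√ω))`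
satisfies `−ω h'' − h + h⁵ = 0` and `h(x) → ±1` as `x → ±∞`. -/
theorem stmt_9 (ω : ℝ) (hω : 0 < ω)
    (h : ℝ → ℝ)
    (hh : h = fun x : ℝ => Real.sqrt (2 / 3) * Real.tanh (x / Real.sqrt ω) /
      Real.sqrt (1 - (1 / 3) * Real.tanh (x / Real.sqrt ω) ^ 2)) :
    (∀ x : ℝ, -ω * deriv (deriv h) x - h x + h x ^ 5 = 0) ∧
    Filter.Tendsto h Filter.atTop (nhds 1) ∧
    Filter.Tendsto h Filter.atBot (nhds (-1)) := by
  obtain rfl : h = fun x => kinkProfile (tanh (x / √ω)) := hh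
  have hs := sqrt_pos.mpr hω
  have htanh (y : ℝ) : tanh y ^ 2 < 3 := (tanh_sq_lt_one y).trans (by norm_num)
  refine ⟨fun x => ?_, ?_, ?_⟩
  · rw [deriv_deriv_comp_of_hasDerivAt (S := {t | t ^ 2 < 3}) (fun x => htanh (x / √ω))
      (fun _ => hasDerivAt_kinkProfile) (fun _ => hasDerivAt_kinkProfile')
      (hasDerivAt_tanh_div _) (hasDerivAt_one_sub_tanh_div_sq_div _) x]
    rw [div_pow, sq_sqrt hω.le]
    field_simp
    linear_combination -kinkProfile_ode (htanh (x / √ω))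
  · simpa [kinkProfile_one] using
      tendsto_kinkProfile (tendsto_tanh_atTop.comp (tendsto_id.atTop_div_const hs)) (by norm_num)
  · simpa [kinkProfile_neg_one] using
      tendsto_kinkProfile (tendsto_tanh_atBot.comp (tendsto_id.atBot_div_const hs)) (by norm_num)
end

section
/- Let K(κ) = ∫₀^{π/2} (1 − κ² sin²θ)^{−1/2} dθ and E(κ) = ∫₀^{π/2} (1 − κ² sin²θ)^{1/2} dθ. Then the function κ ↦ K(κ) · ((1 + κ²) E(κ) − (1 − κ²) K(κ)) / (1 + κ²) is strictly increasing on (0,1). -/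
/-!
With `Δ(θ) = √(1 - κ² sin² θ)` and `c = (1 - κ²)/(1 + κ²)`, the function is `K E - c K²`, i.e. the
double integral over `[0, π/2]²` of `((Δ(θ)² + Δ(φ)²)/2 - c) / (Δ(θ) Δ(φ))`. In the variables
`u = κ²`, `a = sin² θ`, `b = sin² φ` this integrand is
`u / (2(1 + u)) · (4 - (1 + u)(a + b)) / √((1 - u a)(1 - u b))`: the first factor is strictly
increasing in `u`, and the second is positive and nondecreasing, since comparing its squares at
`u₁ < u₂` reduces to a polynomial identity whose terms are nonnegative for `a, b ∈ [0, 1]`.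
-/

open Real Set intervalIntegral

theorem strictMonoOn_intervalIntegral {F : ℝ → ℝ → ℝ} {s : Set ℝ} {a b : ℝ} (hab : a < b)
    (hF : ∀ κ ∈ s, ContinuousOn (F κ) (Icc a b)) (hmono : ∀ θ, StrictMonoOn (F · θ) s) :
    StrictMonoOn (fun κ => ∫ θ in a..b, F κ θ) s := fun _ hp _ hq hpq =>
  integral_lt_integral_of_continuousOn_of_le_of_exists_lt hab (hF _ hp) (hF _ hq)
    (fun θ _ => (hmono θ hp hq hpq).le) ⟨a, left_mem_Icc.2 hab.le, hmono a hp hq hpq⟩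

theorem div_sqrt_le_div_sqrt {x₁ x₂ p₁ p₂ : ℝ} (hx₁ : 0 ≤ x₁) (hx₂ : 0 ≤ x₂) (hp₁ : 0 < p₁)
    (hp₂ : 0 < p₂) (h : x₁ ^ 2 * p₂ ≤ x₂ ^ 2 * p₁) : x₁ / √p₁ ≤ x₂ / √p₂ := by
  rw [div_le_div_iff₀ (sqrt_pos.2 hp₁) (sqrt_pos.2 hp₂)]
  have := Real.sqrt_le_sqrt h
  rwa [sqrt_mul (sq_nonneg _), sqrt_mul (sq_nonneg _), sqrt_sq hx₁, sqrt_sq hx₂] at this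

theorem four_sub_sq_mul_le {u₁ u₂ a b : ℝ} (hu₁ : 0 ≤ u₁) (h : u₁ < u₂) (hu₂ : u₂ ≤ 1)
    (ha : a ∈ Icc (0 : ℝ) 1) (hb : b ∈ Icc (0 : ℝ) 1) :
    (4 - (1 + u₁) * (a + b)) ^ 2 * ((1 - u₂ * a) * (1 - u₂ * b))
      ≤ (4 - (1 + u₂) * (a + b)) ^ 2 * ((1 - u₁ * a) * (1 - u₁ * b)) := by
  obtain ⟨ha0, ha1⟩ := ha
  obtain ⟨hb0, hb1⟩ := hb
  set s := a + b with hs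
  have hs0 : 0 ≤ s := by positivity
  have hC : 0 ≤ s * (4 - s) * (2 - s) :=
    mul_nonneg (mul_nonneg hs0 (by linarith)) (by linarith)
  have hCD : 0 ≤ s * (4 - s) * (2 - s) + ((a - b) ^ 2 - a * b * (2 - s) * (6 - s)) := by
    nlinarith [mul_nonneg ha0 hb0, mul_nonneg (sub_nonneg.2 ha1) (sub_nonneg.2 hb1),
      mul_nonneg (mul_nonneg ha0 hb0) (sq_nonneg (a - b)), mul_nonneg ha0 (sub_nonneg.2 ha1),
      mul_nonneg hb0 (sub_nonneg.2 hb1)]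
  have hP : 0 ≤ s * (4 - s) * (2 - s) + u₂ * ((a - b) ^ 2 - a * b * (2 - s) * (6 - s)) := by
    nlinarith [mul_nonneg (sub_nonneg.2 hu₂) hC, mul_nonneg (hu₁.trans h.le) hCD]
  have hQ : 0 ≤ (4 - (1 + u₂) * s) *
      ((1 - u₂) * (s * (2 - s)) + 2 * u₂ * (a * (1 - b) ^ 2 + b * (1 - a) ^ 2)) := by
    have : 0 ≤ 4 - (1 + u₂) * s := by nlinarith
    have : 0 ≤ 1 - u₂ := by linarith
    have : 0 ≤ 2 - s := by linarith
    have : 0 ≤ u₂ := by linarith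
    positivity
  have key : 0 ≤ u₂ * ((4 - (1 + u₂) * s) ^ 2 * ((1 - u₁ * a) * (1 - u₁ * b))
      - (4 - (1 + u₁) * s) ^ 2 * ((1 - u₂ * a) * (1 - u₂ * b))) := by
    have : 0 ≤ u₂ - u₁ := by linarith
    rw [show u₂ * ((4 - (1 + u₂) * s) ^ 2 * ((1 - u₁ * a) * (1 - u₁ * b))
        - (4 - (1 + u₁) * s) ^ 2 * ((1 - u₂ * a) * (1 - u₂ * b)))
        = (u₂ - u₁) * ((u₂ - u₁) * (s * (4 - s) * (2 - s)
            + u₂ * ((a - b) ^ 2 - a * b * (2 - s) * (6 - s)))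
          + u₁ * ((4 - (1 + u₂) * s) *
            ((1 - u₂) * (s * (2 - s)) + 2 * u₂ * (a * (1 - b) ^ 2 + b * (1 - a) ^ 2)))) by
      rw [hs]; ring]
    positivity
  exact sub_nonneg.1 (nonneg_of_mul_nonneg_right key (by linarith))

theorem monotoneOn_four_sub_div_sqrt {a b : ℝ} (ha : a ∈ Icc (0 : ℝ) 1) (hb : b ∈ Icc (0 : ℝ) 1) :
    MonotoneOn (fun u => (4 - (1 + u) * (a + b)) / √((1 - u * a) * (1 - u * b))) (Ico 0 1) := by
  intro u₁ ⟨hu₁, hu₁'⟩ u₂ ⟨hu₂, hu₂'⟩ h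
  rcases h.eq_or_lt with rfl | h
  · rfl
  have hpos : ∀ u ∈ Ico (0 : ℝ) 1, 0 < (1 - u * a) * (1 - u * b) := fun u ⟨h0, h1⟩ =>
    mul_pos (by nlinarith [ha.1, ha.2]) (by nlinarith [hb.1, hb.2])
  exact div_sqrt_le_div_sqrt (by nlinarith [ha.2, hb.2]) (by nlinarith [ha.2, hb.2])
    (hpos _ ⟨hu₁, hu₁'⟩) (hpos _ ⟨hu₂, hu₂'⟩) (four_sub_sq_mul_le hu₁ h hu₂'.le ha hb)

theorem strictMonoOn_mul_four_sub_div_sqrt {a b : ℝ} (ha : a ∈ Icc (0 : ℝ) 1)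
    (hb : b ∈ Icc (0 : ℝ) 1) :
    StrictMonoOn (fun u => u / (2 * (1 + u)) *
      ((4 - (1 + u) * (a + b)) / √((1 - u * a) * (1 - u * b)))) (Ioo 0 1) := by
  intro p ⟨hp, hp'⟩ q ⟨hq, hq'⟩ hpq
  have hfactor : p / (2 * (1 + p)) < q / (2 * (1 + q)) := by
    rw [div_lt_div_iff₀ (by linarith) (by linarith)]
    nlinarith
  have hratio : 0 < (4 - (1 + p) * (a + b)) / √((1 - p * a) * (1 - p * b)) :=
    div_pos (by nlinarith [ha.2, hb.2])
      (sqrt_pos.2 (mul_pos (by nlinarith [ha.1, ha.2]) (by nlinarith [hb.1, hb.2])))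
  calc p / (2 * (1 + p)) * ((4 - (1 + p) * (a + b)) / √((1 - p * a) * (1 - p * b)))
      < q / (2 * (1 + q)) * ((4 - (1 + p) * (a + b)) / √((1 - p * a) * (1 - p * b))) :=
        mul_lt_mul_of_pos_right hfactor hratio
    _ ≤ q / (2 * (1 + q)) * ((4 - (1 + q) * (a + b)) / √((1 - q * a) * (1 - q * b))) :=
        mul_le_mul_of_nonneg_left
          (monotoneOn_four_sub_div_sqrt ha hb ⟨hp.le, hp'⟩ ⟨hq.le, hq'⟩ hpq.le)
          (div_nonneg (by linarith) (by linarith))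

noncomputable def ellipticDelta (κ θ : ℝ) : ℝ := √(1 - κ ^ 2 * sin θ ^ 2)

noncomputable def ellipticK (κ : ℝ) : ℝ := ∫ θ in (0 : ℝ)..(π / 2), (ellipticDelta κ θ)⁻¹

noncomputable def ellipticE (κ : ℝ) : ℝ := ∫ θ in (0 : ℝ)..(π / 2), ellipticDelta κ θ

noncomputable def ellipticKernel (κ θ φ : ℝ) : ℝ :=
  ((ellipticDelta κ θ ^ 2 + ellipticDelta κ φ ^ 2) / 2 - (1 - κ ^ 2) / (1 + κ ^ 2)) /
    (ellipticDelta κ θ * ellipticDelta κ φ)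

section

variable {κ : ℝ}

theorem one_sub_sq_mul_sin_sq_pos (hκ : κ ^ 2 < 1) (θ : ℝ) : 0 < 1 - κ ^ 2 * sin θ ^ 2 := by
  nlinarith [sin_sq_le_one θ, sq_nonneg κ, sq_nonneg (sin θ)]

theorem ellipticDelta_pos (hκ : κ ^ 2 < 1) (θ : ℝ) : 0 < ellipticDelta κ θ :=
  sqrt_pos.2 (one_sub_sq_mul_sin_sq_pos hκ θ)

theorem ellipticDelta_sq (hκ : κ ^ 2 < 1) (θ : ℝ) :
    ellipticDelta κ θ ^ 2 = 1 - κ ^ 2 * sin θ ^ 2 :=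
  sq_sqrt (one_sub_sq_mul_sin_sq_pos hκ θ).le

theorem continuous_ellipticDelta (κ : ℝ) : Continuous (ellipticDelta κ) := by
  unfold ellipticDelta
  fun_prop

theorem continuous_ellipticDelta_inv (hκ : κ ^ 2 < 1) :
    Continuous fun θ => (ellipticDelta κ θ)⁻¹ :=
  (continuous_ellipticDelta κ).inv₀ fun θ => (ellipticDelta_pos hκ θ).ne'

theorem integral_mul_ellipticDelta_inv_add (hκ : κ ^ 2 < 1) (A B : ℝ) :
    ∫ θ in (0 : ℝ)..(π / 2), (A * (ellipticDelta κ θ)⁻¹ + B * ellipticDelta κ θ)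
      = A * ellipticK κ + B * ellipticE κ := by
  rw [integral_add ((continuous_ellipticDelta_inv hκ).const_mul A |>.intervalIntegrable _ _)
    ((continuous_ellipticDelta κ).const_mul B |>.intervalIntegrable _ _),
    integral_const_mul, integral_const_mul, ellipticK, ellipticE]

theorem integral_ellipticKernel (hκ : κ ^ 2 < 1) (θ : ℝ) :
    ∫ φ in (0 : ℝ)..(π / 2), ellipticKernel κ θ φ
      = (ellipticE κ / 2 - (1 - κ ^ 2) / (1 + κ ^ 2) * ellipticK κ) * (ellipticDelta κ θ)⁻¹
        + ellipticK κ / 2 * ellipticDelta κ θ := by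
  have hθ := (ellipticDelta_pos hκ θ).ne'
  have hsplit : ∀ φ, ellipticKernel κ θ φ
      = (ellipticDelta κ θ / 2 - (1 - κ ^ 2) / (1 + κ ^ 2) * (ellipticDelta κ θ)⁻¹)
          * (ellipticDelta κ φ)⁻¹ + (ellipticDelta κ θ)⁻¹ / 2 * ellipticDelta κ φ := by
    intro φ
    have hφ := (ellipticDelta_pos hκ φ).ne'
    unfold ellipticKernel
    field_simp
    ring
  simp_rw [hsplit]
  rw [integral_mul_ellipticDelta_inv_add hκ]
  field_simp
  ring

theorem integral_integral_ellipticKernel (hκ : κ ^ 2 < 1) :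
    ∫ θ in (0 : ℝ)..(π / 2), ∫ φ in (0 : ℝ)..(π / 2), ellipticKernel κ θ φ
      = ellipticK κ * ((1 + κ ^ 2) * ellipticE κ - (1 - κ ^ 2) * ellipticK κ) / (1 + κ ^ 2) := by
  simp_rw [integral_ellipticKernel hκ]
  rw [integral_mul_ellipticDelta_inv_add hκ]
  field_simp
  ring

theorem ellipticKernel_eq (hκ : κ ^ 2 < 1) (θ φ : ℝ) :
    ellipticKernel κ θ φ = κ ^ 2 / (2 * (1 + κ ^ 2)) *
      ((4 - (1 + κ ^ 2) * (sin θ ^ 2 + sin φ ^ 2)) /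
        √((1 - κ ^ 2 * sin θ ^ 2) * (1 - κ ^ 2 * sin φ ^ 2))) := by
  have hθ := (ellipticDelta_pos hκ θ).ne'
  have hφ := (ellipticDelta_pos hκ φ).ne'
  rw [sqrt_mul (one_sub_sq_mul_sin_sq_pos hκ θ).le, ellipticKernel, ellipticDelta_sq hκ,
    ellipticDelta_sq hκ]
  change _ = _ * (_ / (ellipticDelta κ θ * ellipticDelta κ φ))
  field_simp
  ring

end

theorem strictMonoOn_ellipticKernel (θ φ : ℝ) :
    StrictMonoOn (ellipticKernel · θ φ) (Ioo 0 1) := by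
  have hsq : StrictMonoOn (fun κ : ℝ => κ ^ 2) (Ioo 0 1) :=
    (pow_left_strictMonoOn₀ two_ne_zero).mono fun _ h => h.1.le
  have hmaps : MapsTo (fun κ : ℝ => κ ^ 2) (Ioo 0 1) (Ioo 0 1) := fun κ ⟨h0, h1⟩ =>
    ⟨by positivity, by nlinarith⟩
  have hsin (x : ℝ) : sin x ^ 2 ∈ Icc (0 : ℝ) 1 := ⟨sq_nonneg _, sin_sq_le_one x⟩
  refine ((strictMonoOn_mul_four_sub_div_sqrt (hsin θ) (hsin φ)).comp hsq hmaps).congr ?_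
  intro κ ⟨h0, h1⟩
  exact (ellipticKernel_eq (by nlinarith) θ φ).symm

theorem strictMonoOn_integral_integral_ellipticKernel :
    StrictMonoOn (fun κ => ∫ θ in (0 : ℝ)..(π / 2), ∫ φ in (0 : ℝ)..(π / 2), ellipticKernel κ θ φ)
      (Ioo 0 1) := by
  have hκ {κ : ℝ} (h : κ ∈ Ioo (0 : ℝ) 1) : κ ^ 2 < 1 := by nlinarith [h.1, h.2]
  refine strictMonoOn_intervalIntegral (by positivity) (fun κ h => ?_) fun θ =>
    strictMonoOn_intervalIntegral (by positivity) (fun κ h => ?_) (strictMonoOn_ellipticKernel θ)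
  · simp_rw [integral_ellipticKernel (hκ h)]
    exact (((continuous_ellipticDelta_inv (hκ h)).const_mul _).add
      ((continuous_ellipticDelta κ).const_mul _)).continuousOn
  · have := continuous_ellipticDelta κ
    have hne := fun φ => (ellipticDelta_pos (hκ h) φ).ne'
    exact (Continuous.div (by fun_prop) (by fun_prop)
      fun φ => mul_ne_zero (hne θ) (hne φ)).continuousOn

/-- With `K` and `E` the complete elliptic integrals of first and second
kind, the function `κ ↦ K(κ)·((1 + κ²)E(κ) − (1 − κ²)K(κ))/(1 + κ²)` is strictly
increasing on `(0,1)`. -/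
theorem stmt_16
    (K E : ℝ → ℝ)
    (hK : K = fun κ : ℝ => ∫ θ in (0 : ℝ)..(Real.pi / 2),
      (Real.sqrt (1 - κ ^ 2 * Real.sin θ ^ 2))⁻¹)
    (hE : E = fun κ : ℝ => ∫ θ in (0 : ℝ)..(Real.pi / 2),
      Real.sqrt (1 - κ ^ 2 * Real.sin θ ^ 2)) :
    StrictMonoOn
      (fun κ : ℝ => K κ * ((1 + κ ^ 2) * E κ - (1 - κ ^ 2) * K κ) / (1 + κ ^ 2))
      (Set.Ioo (0 : ℝ) 1) := by
  subst hK hE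
  refine strictMonoOn_integral_integral_ellipticKernel.congr fun κ ⟨h0, h1⟩ => ?_
  exact integral_integral_ellipticKernel (by nlinarith)
end

section
/- Fix an integer k ≥ 1, L > 0, and an open interval I ⊆ (0, ∞). Let H: I × ℝ → ℝ be twice continuously differentiable (jointly in (ω, x)) such that for each ω ∈ I the function h_ω = H(ω, ·) is L-periodic and satisfies −ω ∂_x² H(ω,x) − H(ω,x) + H(ω,x)^{2k+1} = 0 for all x ∈ ℝ, and assume ∂_ω H is twice continuously differentiable in x. Then for every ω ∈ I, ∫₀^L (∂_x H(ω,x))² dx + (k/(k+1)) · d/dω [ ∫₀^L H(ω,x)^{2k+2} dx ] = 0. -/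
/-!
Write `h_ω = H(ω, ·)` and `η = ∂_ω H(ω, ·)`; the equation is `ω h_ω'' = h_ω ^ n - h_ω` with
`n = 2k + 1`. Multiplying it by `h_ω` and integrating by parts over a period gives the virial
identity `ω ∫ h_ω'² = ∫ h_ω² - ∫ h_ω ^ (n+1)` for all `ω` in the open interval. Differentiating
it in `ω` under the integral sign (with `∂_ω ∂_x H = ∂_x ∂_ω H`), and rewriting
`ω ∫ h_ω' η' = -∫ ω h_ω'' η = ∫ h_ω η - ∫ h_ω ^ n η` by one more periodic integration by parts
and the equation, the derivative of the virial identity reduces to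
`∫ h_ω'² + (n - 1) ∫ h_ω ^ n η = 0`, while `d/dω ∫ h_ω ^ (n+1) = (n + 1) ∫ h_ω ^ n η`.
-/

open MeasureTheory Set Function Filter Topology

noncomputable def partialFst (F : ℝ × ℝ → ℝ) (p : ℝ × ℝ) : ℝ := fderiv ℝ F p (1, 0)

noncomputable def partialSnd (F : ℝ × ℝ → ℝ) (p : ℝ × ℝ) : ℝ := fderiv ℝ F p (0, 1)

section PartialDerivatives

variable {F : ℝ × ℝ → ℝ}

theorem hasDerivAt_partialFst {w x : ℝ} (hF : DifferentiableAt ℝ F (w, x)) :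
    HasDerivAt (fun t => F (t, x)) (partialFst F (w, x)) w :=
  hF.hasFDerivAt.comp_hasDerivAt w ((hasDerivAt_id w).prodMk (hasDerivAt_const w x))

theorem hasDerivAt_partialSnd {w x : ℝ} (hF : DifferentiableAt ℝ F (w, x)) :
    HasDerivAt (fun t => F (w, t)) (partialSnd F (w, x)) x :=
  hF.hasFDerivAt.comp_hasDerivAt x ((hasDerivAt_const x w).prodMk (hasDerivAt_id x))

theorem ContDiff.partialFst {m n : WithTop ℕ∞} (hF : ContDiff ℝ n F) (hmn : m + 1 ≤ n) :
    ContDiff ℝ m (partialFst F) :=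
  (hF.fderiv_right hmn).clm_apply contDiff_const

theorem ContDiff.partialSnd {m n : WithTop ℕ∞} (hF : ContDiff ℝ n F) (hmn : m + 1 ≤ n) :
    ContDiff ℝ m (partialSnd F) :=
  (hF.fderiv_right hmn).clm_apply contDiff_const

theorem partialFst_partialSnd (hF : ContDiff ℝ 2 F) :
    partialFst (partialSnd F) = partialSnd (partialFst F) := by
  funext p
  have hd : DifferentiableAt ℝ (fderiv ℝ F) p :=
    (hF.fderiv_right le_rfl).differentiable one_ne_zero p
  show fderiv ℝ (fun q => fderiv ℝ F q (0, 1)) p (1, 0) =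
    fderiv ℝ (fun q => fderiv ℝ F q (1, 0)) p (0, 1)
  simp only [fderiv_clm_apply hd (differentiableAt_const _), fderiv_const_apply]
  simpa using hF.contDiffAt.isSymmSndFDerivAt (by simp) _ _

theorem periodic_partialFst (hF : Differentiable ℝ F) {L ω : ℝ}
    (hper : ∀ᶠ w in 𝓝 ω, Periodic (fun x => F (w, x)) L) :
    Periodic (fun x => partialFst F (ω, x)) L := fun x => by
  dsimp only
  rw [← (hasDerivAt_partialFst (hF (ω, x + L))).deriv,
    ← (hasDerivAt_partialFst (hF (ω, x))).deriv]
  exact EventuallyEq.deriv_eq (hper.mono fun w hw => hw x)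

end PartialDerivatives

theorem hasDerivAt_intervalIntegral_of_continuous {G G' : ℝ × ℝ → ℝ} {a b : ℝ}
    (hG : Continuous G) (hG' : Continuous G')
    (hd : ∀ w x, HasDerivAt (fun t => G (t, x)) (G' (w, x)) w) (ω : ℝ) :
    HasDerivAt (fun w => ∫ x in a..b, G (w, x)) (∫ x in a..b, G' (ω, x)) ω := by
  have hsec : ∀ {K : ℝ × ℝ → ℝ}, Continuous K → ∀ w, Continuous fun x => K (w, x) :=
    fun hK w => hK.comp (continuous_const.prodMk continuous_id)
  obtain ⟨C, hC⟩ := ((isCompact_closedBall ω 1).prod (isCompact_uIcc (a := a) (b := b))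
    ).exists_bound_of_continuousOn hG'.continuousOn
  refine (intervalIntegral.hasDerivAt_integral_of_dominated_loc_of_deriv_le (bound := fun _ => C)
    (Metric.closedBall_mem_nhds ω one_pos)
    (Eventually.of_forall fun w => (hsec hG w).aestronglyMeasurable)
    ((hsec hG ω).intervalIntegrable _ _) (hsec hG' ω).aestronglyMeasurable
    (ae_of_all _ fun x hx w hw => hC (w, x) ⟨hw, uIoc_subset_uIcc hx⟩)
    intervalIntegrable_const (ae_of_all _ fun x _ w _ => hd w x)).2

theorem hasDerivAt_intervalIntegral_pow {G : ℝ × ℝ → ℝ} (hG : ContDiff ℝ 1 G) (m : ℕ)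
    (a b ω : ℝ) :
    HasDerivAt (fun w => ∫ x in a..b, G (w, x) ^ (m + 1))
      ((m + 1) * ∫ x in a..b, G (ω, x) ^ m * partialFst G (ω, x)) ω := by
  rw [← intervalIntegral.integral_const_mul]
  refine hasDerivAt_intervalIntegral_of_continuous
    (G' := fun p => (m + 1) * (G p ^ m * partialFst G p)) (hG.continuous.pow _)
    (continuous_const.mul ((hG.continuous.pow _).mul (hG.partialFst (m := 0) le_rfl).continuous))
    (fun w x => ?_) ω
  simpa [mul_assoc] using
    (hasDerivAt_partialFst (hG.differentiable one_ne_zero (w, x))).fun_pow (m + 1)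

theorem Function.Periodic.deriv {h : ℝ → ℝ} {L : ℝ} (hh : Periodic h L) :
    Periodic (deriv h) L := fun x => by
  rw [← deriv_comp_add_const, show (fun y => h (y + L)) = h from funext hh]

theorem integral_mul_deriv_eq_neg_of_periodic {u v : ℝ → ℝ} {L : ℝ} (hu : ContDiff ℝ 1 u)
    (hv : ContDiff ℝ 1 v) (hpu : Periodic u L) (hpv : Periodic v L) :
    ∫ x in 0..L, u x * deriv v x = -∫ x in 0..L, deriv u x * v x := by
  have hdu := hu.differentiable one_ne_zero
  have hdv := hv.differentiable one_ne_zero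
  rw [intervalIntegral.integral_mul_deriv_eq_deriv_mul (fun x _ => (hdu x).hasDerivAt)
    (fun x _ => (hdv x).hasDerivAt) ((hu.continuous_deriv le_rfl).intervalIntegrable _ _)
    ((hv.continuous_deriv le_rfl).intervalIntegrable _ _)]
  have hu0 : u L = u 0 := by simpa using hpu 0
  have hv0 : v L = v 0 := by simpa using hpv 0
  rw [hu0, hv0, sub_self, zero_sub]

theorem mul_integral_deriv_mul_deriv_eq_of_periodic {h u : ℝ → ℝ} {L ω : ℝ} {n : ℕ}
    (hh : ContDiff ℝ 2 h) (hu : ContDiff ℝ 1 u) (hph : Periodic h L) (hpu : Periodic u L)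
    (hode : ∀ x, -ω * deriv (deriv h) x - h x + h x ^ n = 0) :
    ω * ∫ x in 0..L, deriv h x * deriv u x =
      (∫ x in 0..L, h x * u x) - ∫ x in 0..L, h x ^ n * u x := by
  have hh' : ContDiff ℝ 1 (deriv h) := hh.iterate_deriv' 1 1
  have hc := hh.continuous
  calc ω * ∫ x in 0..L, deriv h x * deriv u x
      = ∫ x in 0..L, -(ω * deriv (deriv h) x * u x) := by
        rw [integral_mul_deriv_eq_neg_of_periodic hh' hu hph.deriv hpu,
          intervalIntegral.integral_neg, mul_neg, ← intervalIntegral.integral_const_mul]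
        simp only [mul_assoc]
    _ = ∫ x in 0..L, (h x * u x - h x ^ n * u x) :=
        intervalIntegral.integral_congr fun x _ => by linear_combination u x * hode x
    _ = (∫ x in 0..L, h x * u x) - ∫ x in 0..L, h x ^ n * u x :=
        intervalIntegral.integral_sub ((hc.fun_mul hu.continuous).intervalIntegrable _ _)
        (((hc.fun_pow n).fun_mul hu.continuous).intervalIntegrable _ _)

theorem add_mul_deriv_integral_pow_eq_zero_of_periodic {H : ℝ → ℝ → ℝ}
    (hH : ContDiff ℝ 2 (uncurry H)) {U : Set ℝ} (hU : IsOpen U) {L : ℝ} {n : ℕ}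
    (hper : ∀ w ∈ U, Periodic (H w) L)
    (hode : ∀ w ∈ U, ∀ x, -w * deriv (deriv (H w)) x - H w x + H w x ^ n = 0)
    {ω : ℝ} (hω : ω ∈ U) :
    ((n : ℝ) + 1) * (∫ x in 0..L, deriv (H ω) x ^ 2)
      + ((n : ℝ) - 1) * deriv (fun w => ∫ x in 0..L, H w x ^ (n + 1)) ω = 0 := by
  have hH1 : ContDiff ℝ 1 (uncurry H) := hH.of_le one_le_two
  have hHw : ContDiff ℝ 1 (partialFst (uncurry H)) := hH.partialFst le_rfl
  have hsec : ∀ w, ContDiff ℝ 2 (H w) := fun w => hH.comp (contDiff_const.prodMk contDiff_id)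
  have hderiv : ∀ w, deriv (H w) = fun x => partialSnd (uncurry H) (w, x) := fun w =>
    funext fun x => (hasDerivAt_partialSnd (hH1.differentiable one_ne_zero (w, x))).deriv
  have hη : ContDiff ℝ 1 fun x => partialFst (uncurry H) (ω, x) :=
    hHw.comp (contDiff_const.prodMk contDiff_id)
  have hpη : Periodic (fun x => partialFst (uncurry H) (ω, x)) L :=
    periodic_partialFst (hH1.differentiable one_ne_zero) (eventually_of_mem (hU.mem_nhds hω) hper)
  have hderivη : deriv (fun x => partialFst (uncurry H) (ω, x)) =
      fun x => partialFst (partialSnd (uncurry H)) (ω, x) := by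
    rw [partialFst_partialSnd hH]
    exact funext fun x => (hasDerivAt_partialSnd (hHw.differentiable one_ne_zero (ω, x))).deriv
  have hvirial : (fun w => w * (∫ x in 0..L, partialSnd (uncurry H) (w, x) ^ 2)
      - (∫ x in 0..L, H w x ^ 2) + ∫ x in 0..L, H w x ^ (n + 1)) =ᶠ[𝓝 ω] fun _ => 0 := by
    filter_upwards [hU.mem_nhds hω] with w hw
    have := mul_integral_deriv_mul_deriv_eq_of_periodic (hsec w) ((hsec w).of_le one_le_two)
      (hper w hw) (hper w hw) (hode w hw)
    simp only [hderiv w, ← sq, ← pow_succ] at this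
    rw [this]
    ring
  have hP := hasDerivAt_intervalIntegral_pow (hH.partialSnd le_rfl) 1 0 L ω
  have hQ := hasDerivAt_intervalIntegral_pow hH1 1 0 L ω
  have hR := hasDerivAt_intervalIntegral_pow hH1 n 0 L ω
  -- the virial identity holds near `ω`, so its derivative at `ω` vanishes
  have h0 := ((((hasDerivAt_id ω).mul hP).sub hQ).add hR).unique
    ((hasDerivAt_const ω 0).congr_of_eventuallyEq hvirial)
  have hIBP := mul_integral_deriv_mul_deriv_eq_of_periodic (hsec ω) hη (hper ω hω) hpη (hode ω hω)
  rw [hderiv ω, hderivη] at hIBP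
  beta_reduce at hIBP
  have hR' : deriv (fun w => ∫ x in 0..L, H w x ^ (n + 1)) ω = _ := hR.deriv
  simp only [uncurry_apply_pair, pow_one, id, Nat.reduceAdd] at h0 hR'
  rw [hderiv ω, hR']
  linear_combination (n + 1 : ℝ) * h0 - 2 * (n + 1 : ℝ) * hIBP

theorem stmt_18_general (k : ℕ) (L : ℝ)
    (a c : ℝ) (I : Set ℝ) (hI : I = Set.Ioo a c)
    (H : ℝ → ℝ → ℝ)
    (hsm : ContDiff ℝ 2 (fun p : ℝ × ℝ => H p.1 p.2))
    (hper : ∀ ω ∈ I, Function.Periodic (H ω) L)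
    (hode : ∀ ω ∈ I, ∀ x : ℝ,
      -ω * deriv (deriv (H ω)) x - H ω x + H ω x ^ (2 * k + 1) = 0) :
    ∀ ω ∈ I,
      (∫ x in (0 : ℝ)..L, (deriv (H ω) x) ^ 2)
        + ((k : ℝ) / ((k : ℝ) + 1)) *
          deriv (fun w : ℝ => ∫ x in (0 : ℝ)..L, H w x ^ (2 * k + 2)) ω = 0 := by
  intro ω hω
  have key := add_mul_deriv_integral_pow_eq_zero_of_periodic hsm (hI ▸ isOpen_Ioo) hper hode hω
  push_cast at key
  field_simp
  linear_combination key / 2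

/-- For a jointly `C²` family `ω ↦ H(ω,·)` of `L`-periodic solutions of
`−ω ∂ₓ² H − H + H^(2k+1) = 0` on an open interval `I ⊆ (0,∞)`, with `∂_ω H` twice
continuously differentiable in `x`, one has for every `ω ∈ I`:
`∫₀^L (∂ₓH(ω,x))² dx + (k/(k+1)) · d/dω [∫₀^L H(ω,x)^(2k+2) dx] = 0`. -/
theorem stmt_18 (k : ℕ) (hk : 1 ≤ k) (L : ℝ) (hL : 0 < L)
    (a c : ℝ) (ha : 0 ≤ a) (I : Set ℝ) (hI : I = Set.Ioo a c)
    (H : ℝ → ℝ → ℝ)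
    (hsm : ContDiff ℝ 2 (fun p : ℝ × ℝ => H p.1 p.2))
    (hper : ∀ ω ∈ I, Function.Periodic (H ω) L)
    (hode : ∀ ω ∈ I, ∀ x : ℝ,
      -ω * deriv (deriv (H ω)) x - H ω x + H ω x ^ (2 * k + 1) = 0)
    (hηsm : ∀ ω ∈ I, ContDiff ℝ 2 (fun x : ℝ => deriv (fun w : ℝ => H w x) ω)) :
    ∀ ω ∈ I,
      (∫ x in (0 : ℝ)..L, (deriv (H ω) x) ^ 2)
        + ((k : ℝ) / ((k : ℝ) + 1)) *
          deriv (fun w : ℝ => ∫ x in (0 : ℝ)..L, H w x ^ (2 * k + 2)) ω = 0 :=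
  stmt_18_general k L a c I hI H hsm hper hode
end
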